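/- arXiv:1001.5221 — 2 statements merged into one kernel-verified Lean document; each statement's English description precedes it below -/
import Mathlib

section
/- Let Ω ⊆ ℝ^n be open and let u₁, u₂, U : Ω → ℝ be continuous with U(x) ≥ 0, u₁(x) > U(x), and u₂(x) > U(x) for all x ∈ Ω. Let p > 1 and set v₁ = u₁ - U, v₂ = u₂ - U. Suppose that ∫_Ω v₁ v₂ [((U+v₁)^p - U^p)/v₁ - ((U+v₂)^p - U^p)/v₂] dx = 0 with the integrand integrable, and suppose v₁(x) ≠ v₂(x) for all x ∈ Ω (i.e., u₁ and u₂ never intersect), with v₁, v₂ continuous and Ω nonempty and connected. Then a contradiction follows; equivalently, if the integral identity holds then there exists x ∈ Ω with u₁(x) = u₂(x). -/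
open MeasureTheory Set in
private lemma slope_lt_aux {p b s t : ℝ} (hp : 1 < p) (hb : 0 ≤ b) (hs : 0 < s) (hst : s < t) :
    ((b + s) ^ p - b ^ p) / s < ((b + t) ^ p - b ^ p) / t := by
  have h := (strictConvexOn_rpow hp).secant_strict_mono
    (a := b) (x := b + s) (y := b + t)
    (by exact hb) (Set.mem_Ici.2 (by linarith)) (Set.mem_Ici.2 (by linarith))
    (by linarith) (by linarith) (by linarith)
  simpa using h

open MeasureTheory Set in
private lemma main_aux (n : ℕ) (Ω : Set (Fin n → ℝ)) (hΩo : IsOpen Ω)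
    (hΩne : Ω.Nonempty)
    (p : ℝ) (hp : 1 < p)
    (U v₁ v₂ : (Fin n → ℝ) → ℝ)
    (hU : ∀ x ∈ Ω, 0 ≤ U x)
    (h₁ : ∀ x ∈ Ω, 0 < v₁ x) (h₂ : ∀ x ∈ Ω, 0 < v₂ x)
    (hlt : ∀ x ∈ Ω, v₂ x < v₁ x)
    (hint : IntegrableOn
      (fun x => v₁ x * v₂ x *
        (((U x + v₁ x) ^ p - U x ^ p) / v₁ x - ((U x + v₂ x) ^ p - U x ^ p) / v₂ x))
      Ω volume)
    (hzero : ∫ x in Ω, v₁ x * v₂ x *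
        (((U x + v₁ x) ^ p - U x ^ p) / v₁ x - ((U x + v₂ x) ^ p - U x ^ p) / v₂ x)
        ∂volume = 0) : False := by
  set f := fun x => v₁ x * v₂ x *
      (((U x + v₁ x) ^ p - U x ^ p) / v₁ x - ((U x + v₂ x) ^ p - U x ^ p) / v₂ x) with hf
  have hpos : ∀ x ∈ Ω, 0 < f x := by
    intro x hx
    have hbr : ((U x + v₂ x) ^ p - U x ^ p) / v₂ x < ((U x + v₁ x) ^ p - U x ^ p) / v₁ x :=
      slope_lt_aux hp (hU x hx) (h₂ x hx) (hlt x hx)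
    have := h₁ x hx; have := h₂ x hx
    have : 0 < ((U x + v₁ x) ^ p - U x ^ p) / v₁ x -
        ((U x + v₂ x) ^ p - U x ^ p) / v₂ x := by linarith
    positivity
  have hμ : 0 < volume Ω := hΩo.measure_pos volume hΩne
  have hnn : 0 ≤ᵐ[volume.restrict Ω] f :=
    (ae_restrict_iff' hΩo.measurableSet).2 (Filter.Eventually.of_forall
      fun x hx => (hpos x hx).le)
  have hlt0 : 0 < ∫ x in Ω, f x ∂volume := by
    rw [setIntegral_pos_iff_support_of_nonneg_ae hnn hint]
    refine lt_of_lt_of_le hμ (measure_mono ?_)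
    intro x hx
    exact ⟨(hpos x hx).ne', hx⟩
  rw [hzero] at hlt0
  exact lt_irrefl 0 hlt0

open MeasureTheory in
theorem stmt_9 (n : ℕ) (Ω : Set (Fin n → ℝ)) (hΩo : IsOpen Ω)
    (hΩne : Ω.Nonempty) (hΩc : IsConnected Ω)
    (p : ℝ) (hp : 1 < p)
    (u₁ u₂ U : (Fin n → ℝ) → ℝ)
    (hu₁c : ContinuousOn u₁ Ω) (hu₂c : ContinuousOn u₂ Ω) (hUc : ContinuousOn U Ω)
    (hU : ∀ x ∈ Ω, 0 ≤ U x)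
    (h₁ : ∀ x ∈ Ω, U x < u₁ x) (h₂ : ∀ x ∈ Ω, U x < u₂ x)
    (v₁ v₂ : (Fin n → ℝ) → ℝ)
    (hv₁ : ∀ x, v₁ x = u₁ x - U x) (hv₂ : ∀ x, v₂ x = u₂ x - U x)
    (hint : IntegrableOn
      (fun x => v₁ x * v₂ x *
        (((U x + v₁ x) ^ p - U x ^ p) / v₁ x - ((U x + v₂ x) ^ p - U x ^ p) / v₂ x))
      Ω volume)
    (hzero : ∫ x in Ω, v₁ x * v₂ x *
        (((U x + v₁ x) ^ p - U x ^ p) / v₁ x - ((U x + v₂ x) ^ p - U x ^ p) / v₂ x)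
        ∂volume = 0) :
    ∃ x ∈ Ω, u₁ x = u₂ x := by
  by_contra hcon
  push_neg at hcon
  have hv₁pos : ∀ x ∈ Ω, 0 < v₁ x := fun x hx => by
    rw [hv₁]; linarith [h₁ x hx]
  have hv₂pos : ∀ x ∈ Ω, 0 < v₂ x := fun x hx => by
    rw [hv₂]; linarith [h₂ x hx]
  have hne : ∀ x ∈ Ω, v₁ x ≠ v₂ x := fun x hx h => by
    rw [hv₁, hv₂] at h
    exact hcon x hx (by linarith)
  -- the difference u₁ - u₂ is continuous and nonzero on connected Ω, so has constant sign
  have hdc : ContinuousOn (fun x => u₁ x - u₂ x) Ω := hu₁c.sub hu₂c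
  obtain ⟨x₀, hx₀⟩ := id hΩne
  have hsign : (∀ x ∈ Ω, v₂ x < v₁ x) ∨ (∀ x ∈ Ω, v₁ x < v₂ x) := by
    rcases lt_or_gt_of_ne (sub_ne_zero.2 (hcon x₀ hx₀)) with h | h
    · right
      intro x hx
      by_contra hxc
      push_neg at hxc
      have hxc' : 0 < u₁ x - u₂ x := by
        rcases lt_of_le_of_ne (by rw [hv₁, hv₂] at hxc; linarith)
          (sub_ne_zero.2 (hcon x hx)).symm with h'
        linarith [h']
      have := hΩc.isPreconnected.intermediate_value hx₀ hx hdc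
      have h0 : (0 : ℝ) ∈ Set.Icc (u₁ x₀ - u₂ x₀) (u₁ x - u₂ x) :=
        ⟨le_of_lt h, le_of_lt hxc'⟩
      obtain ⟨y, hy, hy0⟩ := this h0
      exact hcon y hy (by linarith [sub_eq_zero.1 hy0])
    · left
      intro x hx
      by_contra hxc
      push_neg at hxc
      have hxc' : u₁ x - u₂ x < 0 := by
        rcases lt_of_le_of_ne (by rw [hv₁, hv₂] at hxc; linarith)
          (sub_ne_zero.2 (hcon x hx)) with h'
        linarith [h']
      have := hΩc.isPreconnected.intermediate_value hx hx₀ hdc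
      have h0 : (0 : ℝ) ∈ Set.Icc (u₁ x - u₂ x) (u₁ x₀ - u₂ x₀) :=
        ⟨le_of_lt hxc', le_of_lt h⟩
      obtain ⟨y, hy, hy0⟩ := this h0
      exact hcon y hy (by linarith [sub_eq_zero.1 hy0])
  rcases hsign with hs | hs
  · exact main_aux n Ω hΩo hΩne p hp U v₁ v₂ hU hv₁pos hv₂pos hs hint hzero
  · refine main_aux n Ω hΩo hΩne p hp U v₂ v₁ hU hv₂pos hv₁pos hs ?_ ?_
    · have hneg : IntegrableOn (fun x => -(v₁ x * v₂ x *
          (((U x + v₁ x) ^ p - U x ^ p) / v₁ x - ((U x + v₂ x) ^ p - U x ^ p) / v₂ x)))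
          Ω volume := hint.neg
      refine hneg.congr_fun ?_ hΩo.measurableSet
      intro x hx
      ring
    · have : ∫ x in Ω, -(v₁ x * v₂ x *
          (((U x + v₁ x) ^ p - U x ^ p) / v₁ x - ((U x + v₂ x) ^ p - U x ^ p) / v₂ x))
          ∂volume = 0 := by
        rw [integral_neg, hzero, neg_zero]
      rw [← this]
      apply setIntegral_congr_fun hΩo.measurableSet
      intro x hx
      ring
end

section
/- Let p > 1 and suppose η > 1 and u > U ≥ 0. Then setting H = η(u - U) + U, one has η(u^p - U^p) + U^p < H^p. -/
/-! Since `H = U + η (u - U)` with `η > 1`, the point `u` is the proper convex combination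
`η⁻¹ H + (1 - η⁻¹) U` of `U ≠ H`; strict convexity of `t ↦ t ^ p` on `[0, ∞)` gives
`u ^ p < η⁻¹ H ^ p + (1 - η⁻¹) U ^ p`, which is the claim multiplied by `η`. -/

theorem StrictConvexOn.mul_sub_add_lt_apply_add_smul {E : Type*} [AddCommGroup E] [Module ℝ E]
    {s : Set E} {f : E → ℝ} (hf : StrictConvexOn ℝ s f) {a b : E} (ha : a ∈ s) (hab : a ≠ b)
    {η : ℝ} (hη : 1 < η) (hc : a + η • (b - a) ∈ s) :
    η * (f b - f a) + f a < f (a + η • (b - a)) := by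
  have hη₀ : 0 < η := one_pos.trans hη
  have hca : a + η • (b - a) ≠ a := by
    simpa [hη₀.ne', sub_eq_zero] using hab.symm
  have hb : η⁻¹ • (a + η • (b - a)) + (1 - η⁻¹) • a = b := by
    rw [smul_add, smul_smul, inv_mul_cancel₀ hη₀.ne', one_smul, sub_smul, one_smul]
    abel
  have key := hf.2 hc ha hca (inv_pos.2 hη₀) (sub_pos.2 (inv_lt_one_of_one_lt₀ hη))
    (add_sub_cancel _ _)
  rw [hb, smul_eq_mul, smul_eq_mul] at key
  have := mul_lt_mul_of_pos_left key hη₀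
  field_simp at this ⊢
  linarith

theorem stmt_12 (p U u η : ℝ) (hp : 1 < p) (hU : 0 ≤ U) (hUu : U < u)
    (hη : 1 < η) :
    η * (u ^ p - U ^ p) + U ^ p < (η * (u - U) + U) ^ p := by
  have hH : U + η • (u - U) ∈ Set.Ici (0 : ℝ) := by
    rw [smul_eq_mul]
    exact add_nonneg hU (mul_nonneg (by linarith) (sub_nonneg.2 hUu.le))
  have key := (strictConvexOn_rpow hp).mul_sub_add_lt_apply_add_smul hU hUu.ne hη hH
  rwa [smul_eq_mul, add_comm U] at key
end
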